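/- Let n ∈ ℕ and ϑ ∈ [1,∞). Then there exist a family {Ω_x}_{x ∈ X} of countably infinite subsets of [ϑ,∞), indexed by the set X of finite tuples of positive integers (including the empty tuple 0), and a discrete Borel probability measure ν on [0,∞) with closed support contained in [ϑ,∞), such that: (i) the atom set of ν equals Ω_0; (ii) Ω_0 = ⨆_{j₁≥1} Ω_{(j₁)} and, for every tuple (j₁,...,j_k), Ω_{(j₁,...,j_k)} = ⨆_{j_{k+1}≥1} Ω_{(j₁,...,j_k,j_{k+1})} (disjoint unions); (iii) for every k ≥ 0 and every x ∈ ℕ^k, ∫_{Ω_x} s^{k+n} dν(s) < ∞ and ∫_{Ω_x} s^{k+n+1} dν(s) = ∞. -/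

import Mathlib

/-!
Index the atoms by the tuples themselves: `a_x = ϑ · 2^(code x)` for an injective coding of
tuples, carrying mass proportional to `a_x^-(|x|+n)`. The cell `Ω_y` consists of the atoms
`a_x` such that `x`, padded with `1`s, begins with `y`; these cells are partitioned by the
cells `Ω_{y⌢j}`. In `∫_{Ω_y} s^(|y|+n+1) dν` every child `y⌢j` contributes the same positive
mass, so the integral diverges. In `∫_{Ω_y} s^(|y|+n) dν` only the finitely many prefixes
of `y` are not longer than `y`, and every longer `x` contributes at most
`a_x⁻¹ ≤ 2^-(code x)`, so the integral converges.
-/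

open MeasureTheory ENNReal

/-- `μ` is a discrete Borel measure on `ℝ` whose set of atoms is exactly `Δ`. -/
def IsDiscreteWithAtoms (μ : Measure ℝ) (Δ : Set ℝ) : Prop :=
  ∃ α : ℝ → ℝ, (∀ t ∈ Δ, 0 < α t) ∧
    μ = Measure.sum (fun t : Δ => ENNReal.ofReal (α t) • Measure.dirac (t : ℝ))

open Function Set

section PaddedCylinder

variable {α : Type*} (d : α)

def paddedCylinder (y : List α) : Set (List α) :=
  {x | ∀ i < y.length, x.getD i d = y.getD i d}

variable {d}

@[simp]
lemma paddedCylinder_nil : paddedCylinder d [] = univ := by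
  ext x; simp [paddedCylinder]

lemma append_mem_paddedCylinder (y z : List α) : y ++ z ∈ paddedCylinder d y :=
  fun _ h => List.getD_append _ _ _ _ h

lemma mem_paddedCylinder_append_singleton {y x : List α} {j : α} :
    x ∈ paddedCylinder d (y ++ [j]) ↔ x ∈ paddedCylinder d y ∧ x.getD y.length d = j := by
  simp +contextual only [paddedCylinder, mem_ofPred_eq, List.length_append, List.length_singleton,
    Nat.forall_lt_succ_right, List.getD_append, le_refl, List.getD_append_right, Nat.sub_self,
    List.getD_cons_zero]

lemma paddedCylinder_eq_iUnion (y : List α) :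
    paddedCylinder d y = ⋃ j, paddedCylinder d (y ++ [j]) := by
  ext x
  simp only [mem_iUnion, mem_paddedCylinder_append_singleton, exists_and_left, exists_eq',
    and_true]

lemma pairwise_disjoint_paddedCylinder_append (y : List α) :
    Pairwise (Disjoint on fun j => paddedCylinder d (y ++ [j])) := by
  intro j j' hjj'
  refine disjoint_left.2 fun x hx hx' => hjj' ?_
  rw [mem_paddedCylinder_append_singleton] at hx hx'
  exact hx.2.symm.trans hx'.2

lemma paddedCylinder_infinite (y : List α) : (paddedCylinder d y).Infinite :=
  infinite_of_injective_forall_mem (f := fun r => y ++ List.replicate r d)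
    (fun a b hab => by simpa using congrArg List.length hab)
    (fun r => append_mem_paddedCylinder y _)

lemma isPrefix_of_mem_paddedCylinder {x y : List α} (hx : x ∈ paddedCylinder d y)
    (hlen : x.length ≤ y.length) : x <+: y := by
  rw [List.prefix_iff_eq_take]
  refine List.ext_getElem (by simp [hlen]) fun i h₁ h₂ => ?_
  have := hx i (h₁.trans_le hlen)
  rw [List.getD_eq_getElem _ _ h₁, List.getD_eq_getElem _ _ (h₁.trans_le hlen)] at this
  rw [this, List.getElem_take]

end PaddedCylinder

section DiscreteMeasure

variable {ι X : Type*} [MeasurableSpace X]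

noncomputable def discreteMeasure (f : ι → X) (p : ι → ℝ) : Measure X :=
  Measure.sum fun t : range f => ENNReal.ofReal (extend f p 0 t) • Measure.dirac (t : X)

lemma lintegral_discreteMeasure [MeasurableSingletonClass X] {f : ι → X} (hf : Injective f)
    (p : ι → ℝ) (g : X → ℝ≥0∞) :
    ∫⁻ t, g t ∂discreteMeasure f p = ∑' i, ENNReal.ofReal (p i) * g (f i) := by
  simp only [discreteMeasure, lintegral_sum_measure, lintegral_smul_measure, lintegral_dirac,
    smul_eq_mul]
  rw [tsum_range (fun t => ENNReal.ofReal (extend f p 0 t) * g t) hf]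
  simp only [hf.extend_apply]

lemma isDiscreteWithAtoms_discreteMeasure {f : ι → ℝ} (hf : Injective f) {p : ι → ℝ}
    (hp : ∀ i, 0 < p i) : IsDiscreteWithAtoms (discreteMeasure f p) (range f) := by
  refine ⟨extend f p 0, ?_, rfl⟩
  rintro - ⟨i, rfl⟩
  rw [hf.extend_apply]
  exact hp i

end DiscreteMeasure

namespace PartitionedDiscreteMeasure

open Encodable

variable (ϑ : ℝ) (n : ℕ)

noncomputable def atom (x : List ℕ+) : ℝ := ϑ * 2 ^ encode x

noncomputable def weight (x : List ℕ+) : ℝ := (atom ϑ x ^ (x.length + n))⁻¹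

noncomputable def totalWeight : ℝ≥0∞ := ∑' x, ENNReal.ofReal (weight ϑ n x)

noncomputable def measure : Measure ℝ :=
  discreteMeasure (atom ϑ) fun x => weight ϑ n x / (totalWeight ϑ n).toReal

def cell (y : List ℕ+) : Set ℝ := atom ϑ '' paddedCylinder 1 y

variable {ϑ n}

lemma le_atom (hϑ : 0 ≤ ϑ) (x : List ℕ+) : ϑ ≤ atom ϑ x :=
  le_mul_of_one_le_right hϑ (one_le_pow₀ one_le_two)

lemma atom_pos (hϑ : 0 < ϑ) (x : List ℕ+) : 0 < atom ϑ x := by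
  unfold atom; positivity

lemma atom_injective (hϑ : ϑ ≠ 0) : Injective (atom ϑ) := fun x x' h =>
  encode_injective <| pow_right_injective₀ two_pos (by norm_num) (mul_left_cancel₀ hϑ h)

lemma weight_pos (hϑ : 0 < ϑ) (x : List ℕ+) : 0 < weight ϑ n x := by
  have := atom_pos hϑ x
  unfold weight; positivity

lemma tsum_ofReal_inv_atom_lt_top (hϑ : 1 ≤ ϑ) : ∑' x, ENNReal.ofReal (atom ϑ x)⁻¹ < ⊤ := by
  refine lt_of_le_of_lt ?_
    ((ENNReal.tsum_geometric_two_encode_le_two (ι := List ℕ+)).trans_lt ofNat_lt_top)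
  refine ENNReal.tsum_le_tsum fun x => ?_
  calc ENNReal.ofReal (atom ϑ x)⁻¹ ≤ ENNReal.ofReal ((2 : ℝ) ^ encode x)⁻¹ :=
        ENNReal.ofReal_le_ofReal <| inv_anti₀ (by positivity) <|
          le_mul_of_one_le_left (by positivity) hϑ
    _ = 2⁻¹ ^ encode x := by
        rw [ENNReal.ofReal_inv_of_pos (by positivity), ENNReal.ofReal_pow zero_le_two,
          ENNReal.ofReal_ofNat, ENNReal.inv_pow]

lemma weight_mul_atom_pow_le_inv_atom (hϑ : 1 ≤ ϑ) {x : List ℕ+} {e : ℕ}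
    (he : e < x.length + n) : weight ϑ n x * atom ϑ x ^ e ≤ (atom ϑ x)⁻¹ := by
  have h₁ : 1 ≤ atom ϑ x := hϑ.trans (le_atom (zero_le_one.trans hϑ) x)
  rw [weight, inv_mul_le_iff₀ (by positivity), ← div_eq_mul_inv,
    le_div_iff₀ (zero_lt_one.trans_le h₁), ← pow_succ]
  exact pow_le_pow_right₀ h₁ he

lemma weight_mul_atom_pow_self (hϑ : 0 < ϑ) (x : List ℕ+) :
    weight ϑ n x * atom ϑ x ^ (x.length + n) = 1 :=
  inv_mul_cancel₀ (pow_pos (atom_pos hϑ x) _).ne'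

lemma tsum_paddedCylinder_lt_top (hϑ : 1 ≤ ϑ) (y : List ℕ+) :
    ∑' x : paddedCylinder 1 y, ENNReal.ofReal (weight ϑ n x * atom ϑ x ^ (y.length + n)) < ⊤ := by
  let F x := ENNReal.ofReal (weight ϑ n x * atom ϑ x ^ (y.length + n))
  have hsplit :
      paddedCylinder 1 y ⊆ (y.inits.toFinset : Set (List ℕ+)) ∪ {x | y.length < x.length} := by
    intro x hx
    by_cases hlen : x.length ≤ y.length
    · exact Or.inl (by simpa using isPrefix_of_mem_paddedCylinder hx hlen)
    · exact Or.inr (not_le.1 hlen)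
  have hlong : ∑' x : {x : List ℕ+ | y.length < x.length}, F x < ⊤ := by
    refine lt_of_le_of_lt ?_ (tsum_ofReal_inv_atom_lt_top hϑ)
    refine (ENNReal.tsum_le_tsum fun x => ?_).trans
      (ENNReal.tsum_comp_le_tsum_of_injective Subtype.val_injective _)
    exact ENNReal.ofReal_le_ofReal
      (weight_mul_atom_pow_le_inv_atom hϑ (Nat.add_lt_add_right x.2 n))
  calc ∑' x : paddedCylinder 1 y, F x
      ≤ ∑' x : ↥((y.inits.toFinset : Set (List ℕ+)) ∪ {x | y.length < x.length}), F x :=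
        ENNReal.tsum_mono_subtype F hsplit
    _ ≤ ∑' x : ↥y.inits.toFinset, F x + ∑' x : {x : List ℕ+ | y.length < x.length}, F x :=
        ENNReal.tsum_union_le F _ _
    _ < ⊤ := by
        rw [Finset.tsum_subtype]
        exact ENNReal.add_lt_top.2 ⟨ENNReal.sum_lt_top.2 fun _ _ => ofReal_lt_top, hlong⟩

lemma tsum_paddedCylinder_eq_top (hϑ : 0 < ϑ) (y : List ℕ+) :
    ∑' x : paddedCylinder 1 y,
      ENNReal.ofReal (weight ϑ n x * atom ϑ x ^ (y.length + n + 1)) = ⊤ := by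
  have hchild (j : ℕ+) : weight ϑ n (y ++ [j]) * atom ϑ (y ++ [j]) ^ (y.length + n + 1) = 1 := by
    convert weight_mul_atom_pow_self (n := n) hϑ (y ++ [j]) using 3
    rw [List.length_append, List.length_singleton]
    ring
  refine eq_top_iff.2 <| le_of_eq_of_le ?_ (ENNReal.tsum_comp_le_tsum_of_injective
    (f := fun j : ℕ+ => (⟨y ++ [j], append_mem_paddedCylinder y _⟩ : paddedCylinder 1 y))
    (fun j j' h => by simpa using congrArg Subtype.val h) _)
  simp only [hchild, ENNReal.ofReal_one, ENNReal.tsum_const_eq_top_of_ne_zero one_ne_zero]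

lemma totalWeight_ne_zero (hϑ : 0 < ϑ) : totalWeight ϑ n ≠ 0 := fun h =>
  (ENNReal.ofReal_pos.2 (weight_pos hϑ [])).ne' (ENNReal.tsum_eq_zero.1 h [])

lemma totalWeight_ne_top (hϑ : 1 ≤ ϑ) : totalWeight ϑ n ≠ ⊤ := by
  refine ne_top_of_le_ne_top (tsum_paddedCylinder_lt_top (n := n) hϑ []).ne ?_
  rw [totalWeight, ← tsum_univ, ← paddedCylinder_nil (d := 1)]
  refine ENNReal.tsum_le_tsum fun ⟨x, _⟩ => ENNReal.ofReal_le_ofReal ?_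
  have h₁ : 1 ≤ atom ϑ x := hϑ.trans (le_atom (zero_le_one.trans hϑ) x)
  exact le_mul_of_one_le_right (weight_pos (zero_lt_one.trans_le hϑ) x).le (one_le_pow₀ h₁)

lemma lintegral_measure (hϑ : 1 ≤ ϑ) (g : ℝ → ℝ≥0∞) :
    ∫⁻ s, g s ∂measure ϑ n =
      (∑' x, ENNReal.ofReal (weight ϑ n x) * g (atom ϑ x)) / totalWeight ϑ n := by
  have hϑ₀ : 0 < ϑ := zero_lt_one.trans_le hϑ
  have hT := ENNReal.toReal_pos (totalWeight_ne_zero (n := n) hϑ₀) (totalWeight_ne_top hϑ)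
  simp only [measure, lintegral_discreteMeasure (atom_injective hϑ₀.ne'),
    ENNReal.ofReal_div_of_pos hT, ENNReal.ofReal_toReal (totalWeight_ne_top hϑ)]
  simp only [div_eq_mul_inv, mul_right_comm _ (totalWeight ϑ n)⁻¹, ENNReal.tsum_mul_right]

lemma cell_countable (y : List ℕ+) : (cell ϑ y).Countable :=
  (paddedCylinder 1 y).to_countable.image _

lemma setLIntegral_cell_pow (hϑ : 1 ≤ ϑ) (y : List ℕ+) (e : ℕ) :
    ∫⁻ s in cell ϑ y, ENNReal.ofReal (s ^ e) ∂measure ϑ n =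
      (∑' x : paddedCylinder 1 y, ENNReal.ofReal (weight ϑ n x * atom ϑ x ^ e)) /
        totalWeight ϑ n := by
  have hϑ₀ : 0 < ϑ := zero_lt_one.trans_le hϑ
  rw [← lintegral_indicator (cell_countable y).measurableSet,
    lintegral_measure hϑ,
    tsum_subtype _ fun x => ENNReal.ofReal (weight ϑ n x * atom ϑ x ^ e)]
  congr 2 with x
  by_cases hx : x ∈ paddedCylinder 1 y
  · simp [cell, indicator, hx, (atom_injective hϑ₀.ne').mem_set_image,
      ENNReal.ofReal_mul (weight_pos hϑ₀ x).le]
  · simp [cell, indicator, hx, (atom_injective hϑ₀.ne').mem_set_image]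

lemma isProbabilityMeasure_measure (hϑ : 1 ≤ ϑ) : IsProbabilityMeasure (measure ϑ n) := by
  refine ⟨?_⟩
  rw [← lintegral_one, lintegral_measure hϑ]
  simp only [mul_one]
  exact ENNReal.div_self (totalWeight_ne_zero (zero_lt_one.trans_le hϑ)) (totalWeight_ne_top hϑ)

lemma measure_Iio (hϑ : 1 ≤ ϑ) : measure ϑ n (Iio ϑ) = 0 := by
  rw [← lintegral_indicator_one measurableSet_Iio, lintegral_measure hϑ]
  simp only [indicator_of_notMem (notMem_Iio.2 (le_atom (zero_le_one.trans hϑ) _)), mul_zero,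
    tsum_zero, ENNReal.zero_div]

end PartitionedDiscreteMeasure

open PartitionedDiscreteMeasure in
/-- For `n ∈ ℕ` and `ϑ ∈ [1,∞)` there exist a family `{Ω_x}` of countably infinite subsets
of `[ϑ,∞)`, indexed by finite tuples of positive integers (modelled as `List ℕ+`, the
empty tuple being `[]`), and a discrete Borel probability measure `ν` supported in `[ϑ,∞)`
such that: (i) the atom set of `ν` is `Ω_[]`; (ii) each `Ω_x` is the pairwise disjoint
union of the sets `Ω_{x⌢j}`, `j ∈ ℕ`; (iii) for every tuple `x` of length `k`,
`∫_{Ω_x} s^{k+n} dν < ∞` and `∫_{Ω_x} s^{k+n+1} dν = ∞`. -/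
theorem exists_partitioned_discrete_measure (n : ℕ) (ϑ : ℝ) (hϑ : 1 ≤ ϑ) :
    ∃ (Ω : List ℕ+ → Set ℝ) (ν : Measure ℝ),
      (∀ x, (Ω x).Countable ∧ (Ω x).Infinite ∧ Ω x ⊆ Set.Ici ϑ) ∧
      IsProbabilityMeasure ν ∧ IsDiscreteWithAtoms ν (Ω []) ∧ ν (Set.Iio ϑ) = 0 ∧
      (∀ x : List ℕ+, Ω x = ⋃ j : ℕ+, Ω (x ++ [j])) ∧
      (∀ x : List ℕ+, Pairwise (Function.onFun Disjoint fun j : ℕ+ => Ω (x ++ [j]))) ∧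
      (∀ x : List ℕ+,
        (∫⁻ s in Ω x, ENNReal.ofReal (s ^ (x.length + n)) ∂ν < ⊤) ∧
        (∫⁻ s in Ω x, ENNReal.ofReal (s ^ (x.length + n + 1)) ∂ν = ⊤)) := by
  have hϑ₀ : 0 < ϑ := zero_lt_one.trans_le hϑ
  have hatom := atom_injective hϑ₀.ne'
  have hT₀ := totalWeight_ne_zero (n := n) hϑ₀
  have hT := totalWeight_ne_top (n := n) hϑ
  refine ⟨cell ϑ, measure ϑ n, fun y => ⟨?_, ?_, ?_⟩, isProbabilityMeasure_measure hϑ, ?_,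
    measure_Iio hϑ, fun y => ?_, fun y j j' hjj' => ?_, fun y => ⟨?_, ?_⟩⟩
  · exact cell_countable y
  · exact (paddedCylinder_infinite y).image hatom.injOn
  · exact image_subset_iff.2 fun x _ => le_atom hϑ₀.le x
  · rw [cell, paddedCylinder_nil, image_univ]
    exact isDiscreteWithAtoms_discreteMeasure hatom fun x =>
      div_pos (weight_pos hϑ₀ x) (ENNReal.toReal_pos hT₀ hT)
  · rw [cell, paddedCylinder_eq_iUnion, image_iUnion]
    rfl
  · exact disjoint_image_of_injective hatom (pairwise_disjoint_paddedCylinder_append y hjj')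
  · rw [setLIntegral_cell_pow hϑ]
    exact ENNReal.div_lt_top (tsum_paddedCylinder_lt_top hϑ y).ne hT₀
  · rw [setLIntegral_cell_pow hϑ, tsum_paddedCylinder_eq_top hϑ₀ y]
    exact ENNReal.top_div_of_ne_top hT
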